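/- arXiv:2501.04851 — 7 statements merged into one kernel-verified Lean document; each statement's English description precedes it below -/
import Mathlib

section
/- For every natural number n ≥ 7, the number ⌊n²/5⌋ is not prime. -/
/- Writing n = 5q + r with r < 5, the quotient ⌊n²/5⌋ = 5q² + 2qr + ⌊r²/5⌋ factors as
5·q², q(5q + 2), q(5q + 4), (5q + 1)(q + 1) or (5q + 3)(q + 1), and n ≥ 7 makes both factors
exceed 1 (apart from n = 7, where the quotient is 9). -/

lemma mul_add_sq_div {d : ℕ} (hd : 0 < d) (q r : ℕ) :
    (d * q + r) ^ 2 / d = d * q ^ 2 + 2 * q * r + r ^ 2 / d := by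
  have h : (d * q + r) ^ 2 = r ^ 2 + (d * q ^ 2 + 2 * q * r) * d := by ring
  rw [h, Nat.add_mul_div_right _ _ hd, add_comm]

theorem stmt0 (n : ℕ) (hn : 7 ≤ n) : ¬ Nat.Prime (n ^ 2 / 5) := by
  obtain ⟨q, r, hr, rfl⟩ : ∃ q r, r < 5 ∧ n = 5 * q + r :=
    ⟨n / 5, n % 5, Nat.mod_lt _ (by norm_num), (Nat.div_add_mod n 5).symm⟩
  rw [mul_add_sq_div (by norm_num) q r]
  interval_cases r
  · exact Nat.not_prime_of_mul_eq (by norm_num : 5 * q ^ 2 = _) (by norm_num)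
      (by nlinarith : 1 < q ^ 2).ne'
  · exact Nat.not_prime_of_mul_eq (by ring : q * (5 * q + 2) = _) (by omega) (by omega)
  · obtain rfl | hq : q = 1 ∨ 2 ≤ q := by omega
    · decide
    · exact Nat.not_prime_of_mul_eq (by ring : q * (5 * q + 4) = _) (by omega) (by omega)
  · exact Nat.not_prime_of_mul_eq (by norm_num; ring : (5 * q + 1) * (q + 1) = _)
      (by omega) (by omega)
  · exact Nat.not_prime_of_mul_eq (by norm_num; ring : (5 * q + 3) * (q + 1) = _)
      (by omega) (by omega)
end

section
/- Let d be an element of the set {2, 3, 4, 5, 8, 12, 16}. Then the sequence with general term ⌊n²/d⌋ is eventually prime-free; that is, there exists a natural number N such that for all n ≥ N, ⌊n²/d⌋ is not prime. -/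
/-!
Write `n ^ 2 = d * m + t` with `m = ⌊n² / d⌋` and `t = n² mod d = (n mod d)² mod d`. For the listed `d`
every square residue `t` is itself a perfect square `s²` with `s < d`, so `d * m = (n - s) * (n + s)`.
Once `n ≥ 2d` both factors exceed `d`, so a prime `m` dividing one of them would force the other to
divide `d`, which is impossible.
-/

theorem Nat.not_prime_of_mul_eq_mul_of_lt {d m a b : ℕ} (h : d * m = a * b) (ha : d < a)
    (hb : d < b) : ¬ m.Prime := by
  intro hm
  rcases hm.dvd_mul.mp (Dvd.intro_left d h) with ⟨k, rfl⟩ | ⟨k, rfl⟩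
  · have hd : d = k * b := Nat.eq_of_mul_eq_mul_left hm.pos (by linarith [h])
    have hk : 0 < k := Nat.pos_of_ne_zero (by rintro rfl; simp at ha)
    nlinarith
  · have hd : d = a * k := Nat.eq_of_mul_eq_mul_left hm.pos (by linarith [h])
    have hk : 0 < k := Nat.pos_of_ne_zero (by rintro rfl; simp at hb)
    nlinarith

theorem Nat.not_prime_sq_div_of_forall_sq_mod_eq_sq {d : ℕ} (hd : 0 < d)
    (hsq : ∀ r < d, ∃ s < d, r ^ 2 % d = s ^ 2) {n : ℕ} (hn : 2 * d ≤ n) :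
    ¬ (n ^ 2 / d).Prime := by
  obtain ⟨s, hs_lt, hs⟩ := hsq (n % d) (Nat.mod_lt n hd)
  rw [← Nat.pow_mod] at hs
  have hfactor : d * (n ^ 2 / d) = (n + s) * (n - s) := by
    have hdiv := Nat.div_add_mod (n ^ 2) d
    rw [hs] at hdiv
    rw [← Nat.sq_sub_sq]
    omega
  exact Nat.not_prime_of_mul_eq_mul_of_lt hfactor (by omega) (by omega)

theorem stmt1 (d : ℕ) (hd : d ∈ ({2, 3, 4, 5, 8, 12, 16} : Finset ℕ)) :
    ∃ N : ℕ, ∀ n : ℕ, N ≤ n → ¬ Nat.Prime (n ^ 2 / d) := by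
  have hpos : 0 < d := by fin_cases hd <;> norm_num
  have hsq : ∀ r < d, ∃ s < d, r ^ 2 % d = s ^ 2 := by fin_cases hd <;> decide
  exact ⟨2 * d, fun n hn => Nat.not_prime_sq_div_of_forall_sq_mod_eq_sq hpos hsq hn⟩
end

section
/- For every even integer t ≥ 4, the sequence with general term ⌊n^t/24⌋ is eventually prime-free; that is, there exists a natural number N such that for all n ≥ N, ⌊n^t/24⌋ is not prime. -/
/-!
Write `t = 2s` with `s ≥ 2`. If `2 ∣ n`, then `16 ∣ n^t` and `n^t` is a square, so
`n^t ≡ 0` or `16 (mod 48)` and `⌊n^t/24⌋` is even. If `n` is odd and `3 ∣ n`, then `81 ∣ n^t`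
and `n^t ≡ 1 (mod 8)`, so `n^t ≡ 9 (mod 72)` and `⌊n^t/24⌋` is divisible by `3`. Otherwise
`a = n^2 ≡ 1 (mod 24)`, so `⌊n^t/24⌋ = (a^s - 1)/24` is a proper multiple of `(a - 1)/24`.
-/

theorem sq_mod_three_ne_two (u : ℕ) : u ^ 2 % 3 ≠ 2 := by
  rw [Nat.pow_mod]
  have := Nat.mod_lt u (by norm_num : 3 > 0)
  interval_cases u % 3 <;> decide

theorem sq_mod_eight_eq_one_of_odd {u : ℕ} (hu : Odd u) : u ^ 2 % 8 = 1 := by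
  rw [Nat.pow_mod]
  have := Nat.mod_lt u (by norm_num : 8 > 0)
  have := Nat.odd_iff.mp hu
  interval_cases h : u % 8 <;> omega

theorem sq_mod_twentyFour_eq_one_of_not_dvd {n : ℕ} (h2 : ¬ 2 ∣ n) (h3 : ¬ 3 ∣ n) :
    n ^ 2 % 24 = 1 := by
  rw [Nat.pow_mod]
  have := Nat.mod_lt n (by norm_num : 24 > 0)
  interval_cases h : n % 24 <;> omega

theorem two_dvd_sq_div_twentyFour_of_four_dvd {u : ℕ} (h4 : 4 ∣ u) : 2 ∣ u ^ 2 / 24 := by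
  have h16 : 16 ∣ u ^ 2 := by simpa using pow_dvd_pow_of_dvd h4 2
  have := sq_mod_three_ne_two u
  omega

theorem three_dvd_sq_div_twentyFour_of_odd {u : ℕ} (h3 : 3 ∣ u) (hu : Odd u) : 3 ∣ u ^ 2 / 24 := by
  have h9 : 9 ∣ u ^ 2 := by simpa using pow_dvd_pow_of_dvd h3 2
  have := sq_mod_eight_eq_one_of_odd hu
  omega

theorem not_prime_pow_div_twentyFour {a s : ℕ} (ha : a % 24 = 1) (ha49 : 49 ≤ a) (hs : 2 ≤ s) :
    ¬ (a ^ s / 24).Prime := by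
  have hpow : a ^ s % 24 = 1 := by simp [Nat.pow_mod, ha]
  have hdvd : (a - 1) / 24 ∣ a ^ s / 24 := by
    have := Nat.div_dvd_div (by omega : 24 ∣ a - 1) (Nat.sub_one_dvd_pow_sub_one a s)
    rwa [show (a ^ s - 1) / 24 = a ^ s / 24 by omega] at this
  have hlarge : a + 24 ≤ a ^ s :=
    calc a + 24 ≤ a ^ 2 := by nlinarith
      _ ≤ a ^ s := Nat.pow_le_pow_right (by omega) hs
  exact Nat.not_prime_of_dvd_of_lt hdvd (by omega) (by omega)

theorem stmt7 (t : ℕ) (ht : 4 ≤ t) (hte : Even t) :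
    ∃ N : ℕ, ∀ n : ℕ, N ≤ n → ¬ Nat.Prime (n ^ t / 24) := by
  obtain ⟨s, rfl⟩ := hte
  have hs : 2 ≤ s := by omega
  refine ⟨7, fun n hn => ?_⟩
  have hsq : n ^ (s + s) = (n ^ s) ^ 2 := by rw [← two_mul, pow_mul']
  have hbig : 3 < n ^ (s + s) / 24 := by
    have : 49 ≤ n ^ s :=
      calc 49 ≤ n ^ 2 := by nlinarith
        _ ≤ n ^ s := Nat.pow_le_pow_right (by omega) hs
    rw [hsq]
    have : 49 * 49 ≤ (n ^ s) ^ 2 := by nlinarith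
    omega
  by_cases h2 : 2 ∣ n
  · have h4 : 4 ∣ n ^ s := (pow_dvd_pow_of_dvd h2 2).trans (pow_dvd_pow n hs)
    have hdvd : 2 ∣ n ^ (s + s) / 24 := hsq ▸ two_dvd_sq_div_twentyFour_of_four_dvd h4
    exact Nat.not_prime_of_dvd_of_lt hdvd le_rfl (by omega)
  by_cases h3 : 3 ∣ n
  · have hodd : Odd (n ^ s) := (Nat.odd_iff.mpr (by omega)).pow
    have hdvd : 3 ∣ n ^ (s + s) / 24 :=
      hsq ▸ three_dvd_sq_div_twentyFour_of_odd (dvd_pow h3 (by omega)) hodd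
    exact Nat.not_prime_of_dvd_of_lt hdvd (by norm_num) (by omega)
  · rw [← two_mul, pow_mul]
    exact not_prime_pow_div_twentyFour (sq_mod_twentyFour_eq_one_of_not_dvd h2 h3)
      (by nlinarith) hs
end

section
/- Let p be an odd prime. Then the sequence with general term ⌊n^(p-1)/p⌋ is eventually prime-free; that is, there exists a natural number N such that for all n ≥ N, ⌊n^(p-1)/p⌋ is not prime. -/
/-!
Let `q = n ^ (p - 1) / p` and `p - 1 = 2k`. If `p ∣ n` then `p * q = n * n ^ (p - 2)`; otherwise
Fermat's little theorem gives `p * q = n ^ (p - 1) - 1 = (n ^ k + 1) * (n ^ k - 1)`. For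
`n ≥ p + 2` both factors exceed `p`, so cancelling the prime `p` from the factor it divides leaves
a nontrivial factorization of `q`.
-/

theorem Nat.not_prime_of_mul_eq_prime_mul {p a b c : ℕ} (hp : p.Prime) (h : a * b = p * c)
    (ha : p < a) (hb : p < b) : ¬ c.Prime := by
  have hp1 := hp.one_lt
  rcases hp.dvd_mul.mp (Dvd.intro c h.symm) with ⟨a', rfl⟩ | ⟨b', rfl⟩
  · have hc : c = a' * b := Nat.eq_of_mul_eq_mul_left hp.pos (by rw [← h, mul_assoc])
    have ha' : a' ≠ 1 := by rintro rfl; simp at ha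
    exact hc ▸ Nat.not_prime_mul ha' (by omega)
  · have hc : c = a * b' := Nat.eq_of_mul_eq_mul_left hp.pos (by rw [← h, mul_left_comm])
    have hb' : b' ≠ 1 := by rintro rfl; simp at hb
    exact hc ▸ Nat.not_prime_mul (by omega) hb'

theorem Nat.Prime.mul_pow_sub_one_div_of_not_dvd {p n : ℕ} (hp : p.Prime) (hpn : ¬ p ∣ n) :
    p * (n ^ (p - 1) / p) = n ^ (p - 1) - 1 := by
  have hfermat : n ^ (p - 1) % p = 1 :=
    Eq.trans (Nat.ModEq.pow_card_sub_one_eq_one hp (hp.coprime_iff_not_dvd.mpr hpn).symm)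
      (Nat.mod_eq_of_lt hp.one_lt)
  have := Nat.div_add_mod (n ^ (p - 1)) p
  omega

theorem stmt10 (p : ℕ) (hp : Nat.Prime p) (hodd : Odd p) :
    ∃ N : ℕ, ∀ n : ℕ, N ≤ n → ¬ Nat.Prime (n ^ (p - 1) / p) := by
  obtain ⟨k, hpk⟩ := hodd
  have hp2 := hp.two_le
  have hk : p - 1 = 2 * k := by omega
  refine ⟨p + 2, fun n hn => ?_⟩
  by_cases hpn : p ∣ n
  · refine Nat.not_prime_of_mul_eq_prime_mul hp (a := n) (b := n ^ (p - 2)) ?_ (by omega)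
      (lt_of_lt_of_le (by omega) (Nat.le_self_pow (by omega) n))
    rw [Nat.mul_div_cancel' (dvd_pow hpn (by omega)), ← pow_succ']
    congr 1
    omega
  · have hnk : n ≤ n ^ k := Nat.le_self_pow (by omega) n
    refine Nat.not_prime_of_mul_eq_prime_mul hp (a := n ^ k + 1) (b := n ^ k - 1) ?_
      (by omega) (by omega)
    rw [hp.mul_pow_sub_one_div_of_not_dvd hpn, hk, two_mul, pow_add, mul_self_tsub_one]
end

section
/- Let p be an odd prime such that p = q² + 1 for some natural number q. Then the sequence with general term ⌊n^((p-1)/2)/p⌋ is eventually prime-free; that is, there exists a natural number N such that for all n ≥ N, ⌊n^((p-1)/2)/p⌋ is not prime. -/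
/-!
Write `p = q² + 1`, so that `q` is even and `e := (p - 1) / 2 = q² / 2` is even too; hence `n ^ e = m²`
with `m = n ^ (e / 2)`. If `p ∣ n` then `n ^ e / p = (n / p) · n ^ (e - 1)`. Otherwise Euler's criterion
gives `m² ≡ ±1 (mod p)`: if `m² ≡ 1` then `n ^ e / p = (m - 1)(m + 1) / p`, and if `m² ≡ -1 ≡ q²` then
`n ^ e / p = (m - q)(m + q) / p`. In each case `p` divides one of two large factors, so the quotient is a
product of two factors at least `2`.
-/

lemma Nat.not_prime_mul_div_of_dvd_left {p a b : ℕ} (hp : 0 < p) (hpa : p ∣ a) (ha : 2 * p ≤ a)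
    (hb : 2 ≤ b) : ¬ (a * b / p).Prime := by
  obtain ⟨s, rfl⟩ := hpa
  have hs : 2 ≤ s := by nlinarith
  rw [mul_assoc, Nat.mul_div_cancel_left _ hp]
  exact Nat.not_prime_mul (by omega) (by omega)

lemma Nat.Prime.not_prime_mul_add_div {p a b r : ℕ} (hp : p.Prime) (hab : p ∣ a * b)
    (ha : 2 * p ≤ a) (hb : 2 * p ≤ b) (hr : r < p) : ¬ ((a * b + r) / p).Prime := by
  have hp2 := hp.two_le
  rw [Nat.add_div_of_dvd_right hab, Nat.div_eq_of_lt hr, add_zero]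
  rcases hp.dvd_mul.mp hab with hpa | hpb
  · exact Nat.not_prime_mul_div_of_dvd_left hp.pos hpa ha (by omega)
  · rw [mul_comm]
    exact Nat.not_prime_mul_div_of_dvd_left hp.pos hpb hb (by omega)

lemma Nat.Prime.not_prime_pow_div_of_dvd {p n e : ℕ} (hp : p.Prime) (hpn : p ∣ n)
    (hn : 2 * p ≤ n) (he : 2 ≤ e) : ¬ (n ^ e / p).Prime := by
  obtain ⟨f, rfl⟩ : ∃ f, e = f + 1 := ⟨e - 1, by omega⟩
  have hpow : 2 * p ≤ n ^ f := hn.trans (Nat.le_self_pow (by omega) n)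
  have key := hp.not_prime_mul_add_div (dvd_mul_of_dvd_left hpn _) hn hpow hp.pos
  rwa [add_zero, ← pow_succ'] at key

lemma Nat.Prime.not_prime_sq_div_of_sq_eq_one {p m : ℕ} (hp : p.Prime) (hm : 2 * p + 1 ≤ m)
    (h : (m : ZMod p) ^ 2 = 1) : ¬ (m ^ 2 / p).Prime := by
  have hdvd : p ∣ (m - 1) * (m + 1) := by
    rw [← ZMod.natCast_eq_zero_iff, Nat.cast_mul, Nat.cast_sub (by omega)]
    push_cast
    linear_combination h
  have key := hp.not_prime_mul_add_div hdvd (by omega) (by omega) hp.one_lt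
  rwa [show (m - 1) * (m + 1) + 1 = m ^ 2 by
    obtain ⟨l, rfl⟩ : ∃ l, m = l + 1 := ⟨m - 1, by omega⟩
    simp only [Nat.add_sub_cancel]
    ring] at key

lemma Nat.Prime.not_prime_sq_div_of_sq_eq_neg_one {p q m : ℕ} (hp : p.Prime) (hq : p = q ^ 2 + 1)
    (hm : 2 * p + q ≤ m) (h : (m : ZMod p) ^ 2 = -1) : ¬ (m ^ 2 / p).Prime := by
  have hq2 : ((q ^ 2 : ℕ) : ZMod p) = -1 := by
    rw [eq_neg_iff_add_eq_zero, ← Nat.cast_one, ← Nat.cast_add, ← hq, ZMod.natCast_self]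
  have hdvd : p ∣ (m - q) * (m + q) := by
    rw [← ZMod.natCast_eq_zero_iff, Nat.cast_mul, Nat.cast_sub (by omega)]
    push_cast
    push_cast at hq2
    linear_combination h - hq2
  have key := hp.not_prime_mul_add_div hdvd (by omega) (by omega) (by omega : q ^ 2 < p)
  rwa [show (m - q) * (m + q) + q ^ 2 = m ^ 2 by
    obtain ⟨l, rfl⟩ : ∃ l, m = l + q := ⟨m - q, by omega⟩
    simp only [Nat.add_sub_cancel]
    ring] at key

theorem stmt11 (p q : ℕ) (hp : Nat.Prime p) (hodd : Odd p) (hq : p = q ^ 2 + 1) :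
    ∃ N : ℕ, ∀ n : ℕ, N ≤ n → ¬ Nat.Prime (n ^ ((p - 1) / 2) / p) := by
  have := Fact.mk hp
  obtain ⟨k, hqk⟩ : ∃ k, q = 2 * k := by
    rw [← even_iff_exists_two_mul, ← Nat.even_pow' two_ne_zero, ← Nat.not_odd_iff_even]
    rintro hq2
    exact Nat.not_even_iff_odd.mpr hodd (hq ▸ hq2.add_one)
  have hk : k ≠ 0 := by rintro rfl; simp [hqk, hp.ne_one] at hq
  have hk2 : 1 ≤ k ^ 2 := Nat.one_le_iff_ne_zero.mpr (pow_ne_zero 2 hk)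
  have hp4 : p = 4 * k ^ 2 + 1 := by rw [hq, hqk]; ring
  have hqp : q < p := by nlinarith
  have he : (p - 1) / 2 = 2 * k ^ 2 := by omega
  refine ⟨3 * p, fun n hn => ?_⟩
  have hnm : n ≤ n ^ k ^ 2 := Nat.le_self_pow (pow_ne_zero 2 hk) n
  by_cases hdvd : p ∣ n
  · exact hp.not_prime_pow_div_of_dvd hdvd (by omega) (by omega)
  · have hn0 : (n : ZMod p) ≠ 0 := by rwa [Ne, ZMod.natCast_eq_zero_iff]
    rw [he, mul_comm, pow_mul]
    have hsq : ((n ^ k ^ 2 : ℕ) : ZMod p) ^ 2 = (n : ZMod p) ^ (p / 2) := by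
      rw [show p / 2 = 2 * k ^ 2 by omega]; push_cast; ring
    rcases ZMod.pow_div_two_eq_neg_one_or_one p hn0 with h | h <;> rw [← hsq] at h
    · exact hp.not_prime_sq_div_of_sq_eq_one (by omega) h
    · exact hp.not_prime_sq_div_of_sq_eq_neg_one hq (by omega) h
end

section
/- Let p ≥ 5 be a prime such that p = q⁶ + q³ + 1 for some natural number q. Then the sequence with general term ⌊n^((p-1)/3)/p⌋ is eventually prime-free; that is, there exists a natural number N such that for all n ≥ N, ⌊n^((p-1)/3)/p⌋ is not prime. -/
/-!
Since `p ≠ 3`, `q ≢ 1 (mod 3)`, which forces `9 ∣ q⁶ + q³ = p - 1`; so `(p - 1) / 3 = 3k` and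
every term is a cube `a³` with `a = nᵏ`. Modulo `p`, the element `n^((p-1)/3)` is `0` or a
cube root of unity, and the cube roots of unity are `1, q³, q⁶` because `q³` is a root of
`X² + X + 1`. Hence `a³ ≡ d³ (mod p)` with `d ∈ {0, 1, q, q²}`, so `d³ < p` and
`⌊a³/p⌋ = (a - d)(a² + ad + d²)/p`. The prime `p` divides one of the two factors, both of which
are at least `2p` once `n ≥ 3p`, so the quotient splits into two factors greater than `1`.
-/

lemma nine_dvd_or_three_dvd (q : ℕ) : 9 ∣ q ^ 6 + q ^ 3 ∨ 3 ∣ q ^ 6 + q ^ 3 + 1 := by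
  have hmod9 : ∀ x : ZMod 9, x ^ 6 + x ^ 3 = 0 ∨ 3 * (x ^ 6 + x ^ 3 + 1) = 0 := by decide
  rcases hmod9 q with h | h
  · left
    exact (ZMod.natCast_eq_zero_iff _ 9).mp (by push_cast; exact h)
  · right
    refine Nat.dvd_of_mul_dvd_mul_left (by norm_num : 0 < 3) ?_
    exact (ZMod.natCast_eq_zero_iff _ 9).mp (by push_cast; exact h)

lemma eq_one_or_eq_or_eq_sq_of_pow_three_eq_one {R : Type*} [CommRing R] [IsDomain R] {ω u : R}
    (hω : ω ^ 2 + ω + 1 = 0) (hu : u ^ 3 = 1) : u = 1 ∨ u = ω ∨ u = ω ^ 2 := by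
  have h : (u - 1) * ((u - ω) * (u - ω ^ 2)) = 0 := by
    linear_combination hu + (u - 1) * (ω - 1 - u) * hω
  simpa only [mul_eq_zero, sub_eq_zero] using h

lemma exists_cube_lt_modEq_pow_div_three {p q : ℕ} (hp : p.Prime) (hq : p = q ^ 6 + q ^ 3 + 1)
    (h3 : 3 ∣ p - 1) (n : ℕ) : ∃ d, d ^ 3 < p ∧ n ^ ((p - 1) / 3) ≡ d ^ 3 [MOD p] := by
  have : Fact p.Prime := ⟨hp⟩
  suffices h : ∃ d ≤ q ^ 2, (n : ZMod p) ^ ((p - 1) / 3) = (d : ZMod p) ^ 3 by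
    obtain ⟨d, hdq, hd⟩ := h
    refine ⟨d, ?_, (ZMod.natCast_eq_natCast_iff _ _ _).mp (by push_cast; exact hd)⟩
    calc d ^ 3 ≤ (q ^ 2) ^ 3 := Nat.pow_le_pow_left hdq 3
      _ < p := by rw [hq]; ring_nf; omega
  by_cases hn : (n : ZMod p) = 0
  · have he : (p - 1) / 3 ≠ 0 := by have := hp.two_le; omega
    exact ⟨0, Nat.zero_le _, by simp [hn, he]⟩
  have hω : ((q : ZMod p) ^ 3) ^ 2 + (q : ZMod p) ^ 3 + 1 = 0 := by
    have h : ((q ^ 6 + q ^ 3 + 1 : ℕ) : ZMod p) = 0 := by rw [← hq, ZMod.natCast_self]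
    push_cast at h
    linear_combination h
  have hu : ((n : ZMod p) ^ ((p - 1) / 3)) ^ 3 = 1 := by
    rw [← pow_mul, Nat.div_mul_cancel h3]
    exact ZMod.pow_card_sub_one_eq_one hn
  have hq0 : q ≠ 0 := by rintro rfl; exact Nat.not_prime_one (by simpa [hq] using hp)
  rcases eq_one_or_eq_or_eq_sq_of_pow_three_eq_one hω hu with h | h | h
  · exact ⟨1, Nat.one_le_pow _ _ (Nat.pos_of_ne_zero hq0), by simp [h]⟩
  · exact ⟨q, Nat.le_self_pow two_ne_zero q, by simp [h]⟩
  · exact ⟨q ^ 2, le_rfl, by push_cast; rw [h, ← pow_mul, ← pow_mul]⟩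

lemma not_prime_mul_div_of_dvd {p x y : ℕ} (hp : p.Prime) (hxy : p ∣ x * y)
    (hx : 2 * p ≤ x) (hy : 2 * p ≤ y) : ¬ (x * y / p).Prime := by
  have hp2 := hp.two_le
  rcases hp.dvd_mul.mp hxy with ⟨x', rfl⟩ | ⟨y', rfl⟩
  · rw [mul_assoc, Nat.mul_div_cancel_left _ hp.pos]
    exact Nat.not_prime_mul (by rintro rfl; omega) (by omega)
  · rw [mul_left_comm, Nat.mul_div_cancel_left _ hp.pos]
    exact Nat.not_prime_mul (by omega) (by rintro rfl; omega)

lemma not_prime_cube_div_of_modEq {p a d : ℕ} (hp : p.Prime) (hd : d ^ 3 < p) (ha : 3 * p ≤ a)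
    (hmod : a ^ 3 ≡ d ^ 3 [MOD p]) : ¬ (a ^ 3 / p).Prime := by
  have hdp : d < p := (Nat.le_self_pow three_ne_zero d).trans_lt hd
  have hdiv : p * (a ^ 3 / p) + d ^ 3 = a ^ 3 := by
    rw [← Nat.mod_eq_of_lt hd, ← hmod, Nat.div_add_mod]
  obtain ⟨b, rfl⟩ := Nat.exists_eq_add_of_le (hdp.le.trans (by omega : p ≤ a))
  have hfactor : p * ((d + b) ^ 3 / p) = b * ((d + b) ^ 2 + (d + b) * d + d ^ 2) := by
    linarith
  rw [← Nat.mul_div_cancel_left ((d + b) ^ 3 / p) hp.pos, hfactor]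
  refine not_prime_mul_div_of_dvd hp ⟨_, hfactor.symm⟩ (by omega) ?_
  nlinarith

theorem stmt12 (p q : ℕ) (hp : Nat.Prime p) (hp5 : 5 ≤ p) (hq : p = q ^ 6 + q ^ 3 + 1) :
    ∃ N : ℕ, ∀ n : ℕ, N ≤ n → ¬ Nat.Prime (n ^ ((p - 1) / 3) / p) := by
  have h9 : 9 ∣ p - 1 := by
    have hp1 : p - 1 = q ^ 6 + q ^ 3 := by omega
    rcases nine_dvd_or_three_dvd q with h | h
    · rwa [hp1]
    · rw [← hq, Nat.prime_dvd_prime_iff_eq Nat.prime_three hp] at h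
      omega
  obtain ⟨k, hk⟩ := h9
  have hexp : (p - 1) / 3 = k * 3 := by omega
  refine ⟨3 * p, fun n hn => ?_⟩
  have h3 : 3 ∣ p - 1 := Dvd.intro (3 * k) (by omega)
  obtain ⟨d, hdp, hmod⟩ := exists_cube_lt_modEq_pow_div_three hp hq h3 n
  rw [hexp, pow_mul] at hmod ⊢
  exact not_prime_cube_div_of_modEq hp hdp (hn.trans (Nat.le_self_pow (by omega) n)) hmod
end

section
/- Let p be an odd prime and let c be an integer such that -c-1 is a quadratic nonresidue modulo p, i.e., there is no integer x with x² ≡ -c-1 (mod p). For each integer n ≥ 1, define q_n = ⌊(p-1)!·(n² + c)/p⌋ (the floor of the rational number (p-1)!(n²+c)/p). Then for every n ≥ 1 there exists a prime number r < p such that r divides q_n. -/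
/-!
Write `(p-1)! (n² + c) = p q + s` with `0 ≤ s < p`. By Wilson's theorem `s ≡ -(n² + c) (mod p)`,
so `s = 1` would make `-c - 1 ≡ n²` a square. Hence `s = 0` or `s ≥ 2`, and in either case some
prime `r < p` divides `s` (take `r = 2` if `s = 0`). Such an `r` divides `(p-1)!`, hence `p q`,
hence `q`.
-/

lemma Nat.exists_prime_lt_dvd_of_ne_one {p s : ℕ} (hp : 2 < p) (hs : s < p) (hs1 : s ≠ 1) :
    ∃ r, r.Prime ∧ r < p ∧ r ∣ s := by
  rcases Nat.eq_zero_or_pos s with rfl | hs0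
  · exact ⟨2, Nat.prime_two, hp, dvd_zero 2⟩
  · exact ⟨s.minFac, Nat.minFac_prime hs1, (Nat.minFac_le hs0).trans_lt hs, Nat.minFac_dvd s⟩

lemma Int.dvd_ediv_of_dvd_of_dvd_emod {r b a : ℤ} (hrb : IsCoprime r b) (ha : r ∣ a)
    (hmod : r ∣ a % b) : r ∣ a / b := by
  have hmul : r ∣ b * (a / b) := by
    rw [show b * (a / b) = a - a % b by rw [Int.emod_def]; ring]
    exact dvd_sub ha hmod
  exact hrb.dvd_of_dvd_mul_left hmul

lemma factorial_pred_mul_emod_ne_one {p : ℕ} [Fact p.Prime] {m : ℤ}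
    (hm : ¬ (p : ℤ) ∣ m + 1) : ((p - 1).factorial * m : ℤ) % p ≠ 1 := by
  intro h
  apply hm
  have hcast : ((((p - 1).factorial * m : ℤ) % p : ℤ) : ZMod p) = -m := by
    rw [ZMod.intCast_mod]
    push_cast
    rw [ZMod.wilsons_lemma, neg_one_mul]
  rw [h, Int.cast_one, eq_neg_iff_add_eq_zero, add_comm] at hcast
  exact (ZMod.intCast_zmod_eq_zero_iff_dvd _ p).mp (by exact_mod_cast hcast)

theorem exists_prime_lt_dvd_factorial_pred_mul_ediv {p : ℕ} (hp : p.Prime) (hp2 : p ≠ 2) {m : ℤ}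
    (hm : ¬ (p : ℤ) ∣ m + 1) :
    ∃ r : ℕ, r.Prime ∧ r < p ∧ (r : ℤ) ∣ ((p - 1).factorial * m : ℤ) / p := by
  have : Fact p.Prime := ⟨hp⟩
  set N : ℤ := (p - 1).factorial * m
  have hp0 : (0 : ℤ) < p := by exact_mod_cast hp.pos
  have hs0 : 0 ≤ N % p := Int.emod_nonneg N hp0.ne'
  have hs1 : N % p ≠ 1 := factorial_pred_mul_emod_ne_one hm
  obtain ⟨r, hr, hrp, hrs⟩ : ∃ r, r.Prime ∧ r < p ∧ r ∣ (N % p).toNat := by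
    refine Nat.exists_prime_lt_dvd_of_ne_one (lt_of_le_of_ne hp.two_le (Ne.symm hp2)) ?_ ?_
    · have := Int.emod_lt_of_pos N hp0
      omega
    · omega
  refine ⟨r, hr, hrp, Int.dvd_ediv_of_dvd_of_dvd_emod ?_ ?_ ?_⟩
  · exact Nat.Coprime.isCoprime ((Nat.coprime_primes hr hp).mpr hrp.ne)
  · have : r ∣ (p - 1).factorial := Nat.dvd_factorial hr.pos (by omega)
    exact (Int.natCast_dvd_natCast.mpr this).mul_right m
  · rw [← Int.toNat_of_nonneg hs0]
    exact Int.natCast_dvd_natCast.mpr hrs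

theorem stmt13_general (p : ℕ) (hp : Nat.Prime p) (c : ℤ)
    (hc : ¬ ∃ x : ℤ, x ^ 2 ≡ -c - 1 [ZMOD (p : ℤ)]) :
    ∀ n : ℤ, 1 ≤ n →
      ∃ r : ℕ, Nat.Prime r ∧ r < p ∧
        (r : ℤ) ∣ Int.fdiv ((Nat.factorial (p - 1) : ℤ) * (n ^ 2 + c)) (p : ℤ) := by
  intro n _
  -- Modulo 2 every integer is a square: `x² ≡ x`.
  have hp2 : p ≠ 2 := by
    rintro rfl
    refine hc ⟨-c - 1, Int.modEq_iff_dvd.mpr ?_⟩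
    rw [show -c - 1 - (-c - 1) ^ 2 = -((-c - 1) * (-c - 1 - 1)) by ring, dvd_neg]
    exact even_iff_two_dvd.mp (Int.even_mul_pred_self _)
  have hm : ¬ (p : ℤ) ∣ n ^ 2 + c + 1 := fun h =>
    hc ⟨n, (Int.modEq_iff_dvd.mpr (by rwa [show n ^ 2 - (-c - 1) = n ^ 2 + c + 1 by ring])).symm⟩
  rw [Int.fdiv_eq_ediv_of_nonneg _ (Int.natCast_nonneg p)]
  exact exists_prime_lt_dvd_factorial_pred_mul_ediv hp hp2 hm

theorem stmt13 (p : ℕ) (hp : Nat.Prime p) (hodd : Odd p) (c : ℤ)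
    (hc : ¬ ∃ x : ℤ, x ^ 2 ≡ -c - 1 [ZMOD (p : ℤ)]) :
    ∀ n : ℤ, 1 ≤ n →
      ∃ r : ℕ, Nat.Prime r ∧ r < p ∧
        (r : ℤ) ∣ Int.fdiv ((Nat.factorial (p - 1) : ℤ) * (n ^ 2 + c)) (p : ℤ) :=
  stmt13_general p hp c hc
end
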